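/- arXiv:1806.00371 — 5 statements merged into one kernel-verified Lean document; each statement's English description precedes it below -/
import Mathlib

section
/- Let N₁, N₂ be C¹ norms on ℝⁿ with strictly convex unit spheres, pᵢ = ∇Nᵢ, and let ν be a nonzero vector. For each x with N₁(x) = 1 and x·ν ≥ 0, there is at most one m with N₂(m) = 1, m·ν ≥ 0, and p₂(m) − p₁(x) parallel to ν. -/
/-!
The gradient `p` of a norm `N` at a unit point `m` satisfies `⟪p, m⟫ = N m = 1` (Euler) and
`⟪p, w⟫ ≤ N w`, hence `⟪p, y⟫ < 1` at every other unit point `y` when the unit sphere is strictly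
convex. So for distinct unit points `m₁ ≠ m₂` the difference `d = p₂(m₁) − p₂(m₂)` has
`⟪m₁, d⟫ > 0 > ⟪m₂, d⟫`. But if both `p₂(mᵢ) − p₁(x)` are parallel to `ν`, then `d` is a multiple
of `ν`, and `⟪m₁, ν⟫, ⟪m₂, ν⟫ ≥ 0` rules out such a sign change.
-/

open RealInnerProductSpace

namespace Seminorm

section NormedSpace

variable {E : Type*} [NormedAddCommGroup E] [NormedSpace ℝ E] (N : Seminorm ℝ E)
  {f : E →L[ℝ] ℝ} {m : E}

theorem apply_self_of_hasFDerivAt (hf : HasFDerivAt N f m) : f m = N m := by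
  have hray : HasDerivAt (fun t : ℝ => N (t • m)) (f m) 1 := by
    have hline := (hasDerivAt_id (1 : ℝ)).smul_const m
    rw [← one_smul ℝ m] at hf
    simpa [Function.comp_def] using hf.comp_hasDerivAt (1 : ℝ) hline
  have hlin : HasDerivAt (fun t : ℝ => N (t • m)) (N m) 1 := by
    have hmul : HasDerivAt (fun t : ℝ => t * N m) (N m) 1 := by
      simpa using (hasDerivAt_id (1 : ℝ)).mul_const (N m)
    refine hmul.congr_of_eventuallyEq ?_
    filter_upwards [eventually_gt_nhds one_pos] with t ht
    rw [map_smul_eq_mul, Real.norm_of_nonneg ht.le]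
  exact hray.unique hlin

theorem le_of_hasFDerivAt (hf : HasFDerivAt N f m) (w : E) : f w ≤ N w := by
  set g := (AffineMap.lineMap m (m + w) : ℝ →ᵃ[ℝ] E)
  have hconv : ConvexOn ℝ Set.univ (N ∘ g) := N.convexOn.comp_affineMap g
  have hderiv : HasDerivAt (N ∘ g) (f w) 0 := by
    rw [← AffineMap.lineMap_apply_zero (k := ℝ) m (m + w)] at hf
    simpa using hf.comp_hasDerivAt (0 : ℝ) AffineMap.hasDerivAt_lineMap
  calc f w ≤ slope (N ∘ g) 0 1 :=
        hconv.le_slope_of_hasDerivAt (Set.mem_univ _) (Set.mem_univ _) one_pos hderiv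
    _ = N (m + w) - N m := by simp [g, slope_def_field]
    _ ≤ N w := by linarith [map_add_le_add N m w]

theorem lt_one_of_hasFDerivAt
    (hstrict : ∀ x y, N x = 1 → N y = 1 → x ≠ y →
      ∀ t : ℝ, 0 < t → t < 1 → N (t • x + (1 - t) • y) < 1)
    (hf : HasFDerivAt N f m) {y : E} (hm : N m = 1) (hy : N y = 1) (hne : m ≠ y) :
    f y < 1 := by
  have hmid := hstrict m y hm hy hne (1 / 2) (by norm_num) (by norm_num)
  have hsupp := N.le_of_hasFDerivAt hf ((1 / 2 : ℝ) • m + (1 - 1 / 2 : ℝ) • y)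
  rw [map_add, map_smul, map_smul, N.apply_self_of_hasFDerivAt hf, hm, smul_eq_mul,
    smul_eq_mul] at hsupp
  linarith

end NormedSpace

variable {E : Type*} [NormedAddCommGroup E] [InnerProductSpace ℝ E] [CompleteSpace E]
  (N : Seminorm ℝ E)

theorem inner_sub_gradient_pos
    (hstrict : ∀ x y, N x = 1 → N y = 1 → x ≠ y →
      ∀ t : ℝ, 0 < t → t < 1 → N (t • x + (1 - t) • y) < 1)
    {m₁ m₂ g₁ g₂ : E} (hg₁ : HasGradientAt N g₁ m₁) (hg₂ : HasGradientAt N g₂ m₂)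
    (hm₁ : N m₁ = 1) (hm₂ : N m₂ = 1) (hne : m₁ ≠ m₂) :
    0 < ⟪m₁, g₁ - g₂⟫ := by
  have heuler := N.apply_self_of_hasFDerivAt hg₁.hasFDerivAt
  have hlt := N.lt_one_of_hasFDerivAt hstrict hg₂.hasFDerivAt hm₂ hm₁ hne.symm
  simp only [InnerProductSpace.toDual_apply_apply] at heuler hlt
  rw [inner_sub_right, real_inner_comm, real_inner_comm g₂]
  linarith

end Seminorm

theorem stmt5_general {n : ℕ} (N₂ : EuclideanSpace ℝ (Fin n) → ℝ)
    (hN₂_add : ∀ x y, N₂ (x + y) ≤ N₂ x + N₂ y)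
    (hN₂_smul : ∀ (c : ℝ) x, N₂ (c • x) = |c| * N₂ x)
    (hstrict₂ : ∀ x y, N₂ x = 1 → N₂ y = 1 → x ≠ y →
      ∀ t : ℝ, 0 < t → t < 1 → N₂ (t • x + (1 - t) • y) < 1)
    (p₁ p₂ : EuclideanSpace ℝ (Fin n) → EuclideanSpace ℝ (Fin n))
    (hp₂ : ∀ x, x ≠ 0 → HasGradientAt N₂ (p₂ x) x)
    (ν : EuclideanSpace ℝ (Fin n))
    (x : EuclideanSpace ℝ (Fin n))
    (m₁ m₂ : EuclideanSpace ℝ (Fin n))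
    (hm₁ : N₂ m₁ = 1) (hm₁ν : 0 ≤ ⟪m₁, ν⟫)
    (hpar₁ : ∃ lam : ℝ, p₂ m₁ - p₁ x = lam • ν)
    (hm₂ : N₂ m₂ = 1) (hm₂ν : 0 ≤ ⟪m₂, ν⟫)
    (hpar₂ : ∃ lam : ℝ, p₂ m₂ - p₁ x = lam • ν) :
    m₁ = m₂ := by
  by_contra hne
  let N : Seminorm ℝ (EuclideanSpace ℝ (Fin n)) := .of N₂ hN₂_add (by simpa using hN₂_smul)
  have hp : ∀ m, N m = 1 → HasGradientAt N (p₂ m) m := fun m hm =>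
    hp₂ m (by rintro rfl; simp at hm)
  obtain ⟨a, ha⟩ := hpar₁
  obtain ⟨b, hb⟩ := hpar₂
  have hdiff : p₂ m₁ - p₂ m₂ = (a - b) • ν := by
    rw [sub_smul, ← ha, ← hb, sub_sub_sub_cancel_right]
  have h₁ := N.inner_sub_gradient_pos hstrict₂ (hp m₁ hm₁) (hp m₂ hm₂) hm₁ hm₂ hne
  have h₂ := N.inner_sub_gradient_pos hstrict₂ (hp m₂ hm₂) (hp m₁ hm₁) hm₂ hm₁ (Ne.symm hne)
  rw [hdiff, real_inner_smul_right] at h₁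
  rw [← neg_sub, hdiff, inner_neg_right, real_inner_smul_right] at h₂
  rcases le_total (a - b) 0 with hab | hab
  · nlinarith
  · nlinarith

/-- For `C¹` norms `N₁, N₂` with strictly convex unit spheres and a nonzero vector `ν`:
given `x` on the `N₁`-unit sphere with `x·ν ≥ 0`, there is at most one `m` on the
`N₂`-unit sphere with `m·ν ≥ 0` and `p₂(m) − p₁(x)` parallel to `ν`. -/
theorem stmt5 {n : ℕ} (N₁ N₂ : EuclideanSpace ℝ (Fin n) → ℝ)
    (hN₁_add : ∀ x y, N₁ (x + y) ≤ N₁ x + N₁ y)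
    (hN₁_smul : ∀ (c : ℝ) x, N₁ (c • x) = |c| * N₁ x)
    (hN₁_pos : ∀ x, x ≠ 0 → 0 < N₁ x)
    (hN₂_add : ∀ x y, N₂ (x + y) ≤ N₂ x + N₂ y)
    (hN₂_smul : ∀ (c : ℝ) x, N₂ (c • x) = |c| * N₂ x)
    (hN₂_pos : ∀ x, x ≠ 0 → 0 < N₂ x)
    (hstrict₁ : ∀ x y, N₁ x = 1 → N₁ y = 1 → x ≠ y →
      ∀ t : ℝ, 0 < t → t < 1 → N₁ (t • x + (1 - t) • y) < 1)
    (hstrict₂ : ∀ x y, N₂ x = 1 → N₂ y = 1 → x ≠ y →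
      ∀ t : ℝ, 0 < t → t < 1 → N₂ (t • x + (1 - t) • y) < 1)
    (p₁ p₂ : EuclideanSpace ℝ (Fin n) → EuclideanSpace ℝ (Fin n))
    (hp₁ : ∀ x, x ≠ 0 → HasGradientAt N₁ (p₁ x) x)
    (hp₂ : ∀ x, x ≠ 0 → HasGradientAt N₂ (p₂ x) x)
    (ν : EuclideanSpace ℝ (Fin n)) (hν : ν ≠ 0)
    (x : EuclideanSpace ℝ (Fin n)) (hx : N₁ x = 1) (hxν : 0 ≤ ⟪x, ν⟫)
    (m₁ m₂ : EuclideanSpace ℝ (Fin n))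
    (hm₁ : N₂ m₁ = 1) (hm₁ν : 0 ≤ ⟪m₁, ν⟫)
    (hpar₁ : ∃ lam : ℝ, p₂ m₁ - p₁ x = lam • ν)
    (hm₂ : N₂ m₂ = 1) (hm₂ν : 0 ≤ ⟪m₂, ν⟫)
    (hpar₂ : ∃ lam : ℝ, p₂ m₂ - p₁ x = lam • ν) :
    m₁ = m₂ :=
  stmt5_general N₂ hN₂_add hN₂_smul hstrict₂ p₁ p₂ hp₂ ν x m₁ m₂ hm₁ hm₁ν hpar₁ hm₂ hm₂ν hpar₂
end

section
/- (Snell implies Fermat) Let N₁, N₂ be norms on ℝⁿ with strictly convex unit balls and differentiable away from 0, pᵢ = ∇Nᵢ, Π a hyperplane with normal ν, X and Y points not on Π with X−Y not parallel to Π. If P₀ ∈ Π satisfies p₂(Y−P₀) − p₁(P₀−X) parallel to ν, then P₀ is the unique minimizer over Π of the functional F(P) = N₁(P−X) + N₂(Y−P). -/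
/-!
If a positively homogeneous, subadditive `N` has derivative `f` at `x`, then `f x = N x` (Euler)
and `f y ≤ N y` for all `y`; when the unit sphere of `N` is strictly convex, equality at `y ≠ 0`
forces `y` to be a positive multiple of `x`. With `f₁ = p₁(P₀ - X)` and `f₂ = p₂(Y - P₀)`, for
`P ∈ Π` this gives `F(P) ≥ f₁(P - X) + f₂(Y - P) = F(P₀) + (f₁ - f₂)(P - P₀) = F(P₀)`, the last
term vanishing because `f₁ - f₂ ∥ ν ⊥ P - P₀`. The first inequality is strict when `P ≠ P₀`:
`P - X` and `P₀ - X` have the same nonzero `ν`-component, so neither is a positive multiple of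
the other.
-/

open RealInnerProductSpace Filter Set

section SublinearDerivative

variable {E : Type*} [NormedAddCommGroup E] [NormedSpace ℝ E] {N : E → ℝ} {f : E →L[ℝ] ℝ}
  {x : E}

theorem HasFDerivAt.hasDerivAt_comp_add_smul (hf : HasFDerivAt N f x) (y : E) :
    HasDerivAt (fun t : ℝ => N (x + t • y)) (f y) 0 := by
  have hline : HasDerivAt (fun t : ℝ => x + t • y) y 0 := by
    simpa using ((hasDerivAt_id (0 : ℝ)).smul_const y).const_add x
  have hf' : HasFDerivAt N f (x + (0 : ℝ) • y) := by simpa using hf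
  simpa [Function.comp_def] using hf'.comp_hasDerivAt 0 hline

theorem apply_self_eq_of_hasFDerivAt (hom : ∀ c : ℝ, 0 < c → ∀ z, N (c • z) = c * N z)
    (hf : HasFDerivAt N f x) : f x = N x := by
  have hscale : HasDerivAt (fun t : ℝ => (1 + t) * N x) (N x) 0 := by
    simpa using ((hasDerivAt_id (0 : ℝ)).const_add 1).mul_const (N x)
  have heq : (fun t : ℝ => N (x + t • x)) =ᶠ[nhds 0] fun t => (1 + t) * N x := by
    filter_upwards [eventually_gt_nhds (show (-1 : ℝ) < 0 by norm_num)] with t ht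
    rw [show x + t • x = (1 + t) • x by module, hom _ (by linarith)]
  exact ((hf.hasDerivAt_comp_add_smul x).congr_of_eventuallyEq heq.symm).unique hscale

theorem apply_le_of_hasFDerivAt (hadd : ∀ z w, N (z + w) ≤ N z + N w)
    (hom : ∀ c : ℝ, 0 < c → ∀ z, N (c • z) = c * N z) (hf : HasFDerivAt N f x) (y : E) :
    f y ≤ N y := by
  have hslope : Tendsto (slope (fun t : ℝ => N (x + t • y)) 0) (nhdsWithin 0 (Ioi 0))
      (nhds (f y)) :=
    (hasDerivAt_iff_tendsto_slope.mp (hf.hasDerivAt_comp_add_smul y)).mono_left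
      (nhdsWithin_mono _ fun _ ht => ne_of_gt ht)
  refine le_of_tendsto hslope ?_
  filter_upwards [self_mem_nhdsWithin] with t (ht : 0 < t)
  have hsub : N (x + t • y) ≤ N x + t * N y := hom t ht y ▸ hadd x (t • y)
  rw [slope_def_field, div_le_iff₀ (by simpa using ht)]
  simp only [zero_smul, add_zero, sub_zero]
  linarith

theorem apply_lt_of_hasFDerivAt (hadd : ∀ z w, N (z + w) ≤ N z + N w)
    (hom : ∀ c : ℝ, 0 < c → ∀ z, N (c • z) = c * N z) (hpos : ∀ z, z ≠ 0 → 0 < N z)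
    (hstrict : ∀ z w, N z = 1 → N w = 1 → z ≠ w →
      ∀ t : ℝ, 0 < t → t < 1 → N (t • z + (1 - t) • w) < 1)
    (hf : HasFDerivAt N f x) (hx : x ≠ 0) {y : E} (hy : y ≠ 0)
    (hray : ∀ s : ℝ, 0 < s → y ≠ s • x) : f y < N y := by
  have hNx := hpos x hx
  have hNy := hpos y hy
  set u := (N x)⁻¹ • x
  set v := (N y)⁻¹ • y
  have hNu : N u = 1 := by rw [hom _ (by positivity)]; field_simp
  have hNv : N v = 1 := by rw [hom _ (by positivity)]; field_simp
  have hfu : f u = 1 := by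
    rw [map_smul, apply_self_eq_of_hasFDerivAt hom hf, smul_eq_mul]; field_simp
  refine (apply_le_of_hasFDerivAt hadd hom hf y).lt_of_ne fun hfy => ?_
  have hfv : f v = 1 := by rw [map_smul, hfy, smul_eq_mul]; field_simp
  have huv : u ≠ v := by
    intro huv
    refine hray (N y / N x) (by positivity) ?_
    rw [div_eq_mul_inv, mul_smul]
    change y = N y • u
    rw [huv, smul_inv_smul₀ hNy.ne']
  -- `f` is `1` at the midpoint of `u` and `v`, which lies strictly inside the unit ball
  have hmid := hstrict u v hNu hNv huv (1 / 2) (by norm_num) (by norm_num)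
  have hfmid := apply_le_of_hasFDerivAt hadd hom hf ((1 / 2 : ℝ) • u + (1 - 1 / 2 : ℝ) • v)
  simp only [map_add, map_smul, hfu, hfv, smul_eq_mul] at hfmid
  norm_num at hfmid
  linarith

theorem add_lt_add_of_hasFDerivAt {N₁ N₂ : E → ℝ} {f₁ f₂ : E →L[ℝ] ℝ} {X Y P₀ P : E}
    (hadd₁ : ∀ z w, N₁ (z + w) ≤ N₁ z + N₁ w) (hom₁ : ∀ c : ℝ, 0 < c → ∀ z, N₁ (c • z) = c * N₁ z)
    (hpos₁ : ∀ z, z ≠ 0 → 0 < N₁ z)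
    (hstrict₁ : ∀ z w, N₁ z = 1 → N₁ w = 1 → z ≠ w →
      ∀ t : ℝ, 0 < t → t < 1 → N₁ (t • z + (1 - t) • w) < 1)
    (hadd₂ : ∀ z w, N₂ (z + w) ≤ N₂ z + N₂ w) (hom₂ : ∀ c : ℝ, 0 < c → ∀ z, N₂ (c • z) = c * N₂ z)
    (hf₁ : HasFDerivAt N₁ f₁ (P₀ - X)) (hf₂ : HasFDerivAt N₂ f₂ (Y - P₀))
    (hP₀X : P₀ - X ≠ 0) (hPX : P - X ≠ 0) (hray : ∀ s : ℝ, 0 < s → P - X ≠ s • (P₀ - X))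
    (hstat : f₁ (P - P₀) = f₂ (P - P₀)) :
    N₁ (P₀ - X) + N₂ (Y - P₀) < N₁ (P - X) + N₂ (Y - P) := by
  have hsplit₁ : P - X = (P₀ - X) + (P - P₀) := by abel
  have hsplit₂ : Y - P = (Y - P₀) - (P - P₀) := by abel
  have hlt₁ := apply_lt_of_hasFDerivAt hadd₁ hom₁ hpos₁ hstrict₁ hf₁ hP₀X hPX hray
  have hle₂ := apply_le_of_hasFDerivAt hadd₂ hom₂ hf₂ (Y - P)
  rw [hsplit₁, map_add, apply_self_eq_of_hasFDerivAt hom₁ hf₁] at hlt₁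
  rw [hsplit₂, map_sub, apply_self_eq_of_hasFDerivAt hom₂ hf₂] at hle₂
  rw [hsplit₁, hsplit₂]
  linarith

end SublinearDerivative

theorem ne_smul_of_inner_eq {F : Type*} [NormedAddCommGroup F] [InnerProductSpace ℝ F]
    {a b ν : F} (hab : a ≠ b) (hinner : ⟪a, ν⟫ = ⟪b, ν⟫) (hb : ⟪b, ν⟫ ≠ 0) (s : ℝ) :
    a ≠ s • b := by
  intro h
  rw [h, real_inner_smul_left] at hinner
  obtain rfl : s = 1 := (mul_eq_right₀ hb).mp hinner
  exact hab (by simpa using h)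

theorem stmt7_general {n : ℕ} (N₁ N₂ : EuclideanSpace ℝ (Fin n) → ℝ)
    (hN₁_add : ∀ x y, N₁ (x + y) ≤ N₁ x + N₁ y)
    (hN₁_smul : ∀ (c : ℝ) x, N₁ (c • x) = |c| * N₁ x)
    (hN₁_pos : ∀ x, x ≠ 0 → 0 < N₁ x)
    (hN₂_add : ∀ x y, N₂ (x + y) ≤ N₂ x + N₂ y)
    (hN₂_smul : ∀ (c : ℝ) x, N₂ (c • x) = |c| * N₂ x)
    (hstrict₁ : ∀ x y, N₁ x = 1 → N₁ y = 1 → x ≠ y →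
      ∀ t : ℝ, 0 < t → t < 1 → N₁ (t • x + (1 - t) • y) < 1)
    (p₁ p₂ : EuclideanSpace ℝ (Fin n) → EuclideanSpace ℝ (Fin n))
    (hp₁ : ∀ x, x ≠ 0 → HasGradientAt N₁ (p₁ x) x)
    (hp₂ : ∀ x, x ≠ 0 → HasGradientAt N₂ (p₂ x) x)
    (ν : EuclideanSpace ℝ (Fin n)) (c : ℝ)
    (X Y : EuclideanSpace ℝ (Fin n))
    (hX : ⟪X, ν⟫ ≠ c) (hY : ⟪Y, ν⟫ ≠ c)
    (P₀ : EuclideanSpace ℝ (Fin n)) (hP₀ : ⟪P₀, ν⟫ = c)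
    (hsnell : ∃ lam : ℝ, p₂ (Y - P₀) - p₁ (P₀ - X) = lam • ν) :
    ∀ P, ⟪P, ν⟫ = c → P ≠ P₀ →
      N₁ (P₀ - X) + N₂ (Y - P₀) < N₁ (P - X) + N₂ (Y - P) := by
  intro P hP hPne
  obtain ⟨lam, hlam⟩ := hsnell
  have hom₁ : ∀ a : ℝ, 0 < a → ∀ z, N₁ (a • z) = a * N₁ z := fun a ha z => by
    rw [hN₁_smul, abs_of_pos ha]
  have hom₂ : ∀ a : ℝ, 0 < a → ∀ z, N₂ (a • z) = a * N₂ z := fun a ha z => by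
    rw [hN₂_smul, abs_of_pos ha]
  have hP₀X : ⟪P₀ - X, ν⟫ ≠ 0 := by rw [inner_sub_left, hP₀]; exact sub_ne_zero.mpr hX.symm
  have hPX : ⟪P - X, ν⟫ = ⟪P₀ - X, ν⟫ := by rw [inner_sub_left, inner_sub_left, hP, hP₀]
  have hP₀X_ne : P₀ - X ≠ 0 := fun h => hP₀X (by rw [h, inner_zero_left])
  have hPX_ne : P - X ≠ 0 := fun h => hP₀X (by rw [← hPX, h, inner_zero_left])
  have hYP₀ : Y - P₀ ≠ 0 := fun h => hY (by rw [sub_eq_zero.mp h, hP₀])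
  have hstat : ⟪p₁ (P₀ - X), P - P₀⟫ = ⟪p₂ (Y - P₀), P - P₀⟫ := by
    have hνP : ⟪ν, P - P₀⟫ = 0 := by rw [real_inner_comm, inner_sub_left, hP, hP₀, sub_self]
    have h := congrArg (⟪·, P - P₀⟫) hlam
    simp only [inner_sub_left, real_inner_smul_left, hνP, mul_zero] at h
    linarith
  exact add_lt_add_of_hasFDerivAt hN₁_add hom₁ hN₁_pos hstrict₁ hN₂_add hom₂
    (hp₁ _ hP₀X_ne).hasFDerivAt (hp₂ _ hYP₀).hasFDerivAt hP₀X_ne hPX_ne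
    (fun s _ => ne_smul_of_inner_eq (sub_left_injective.ne hPne) hPX hP₀X s) hstat

/-- (Snell implies Fermat) For strictly convex `C¹` norms `N₁, N₂`, a hyperplane
`Π = {P : P·ν = c}`, points `X, Y` off `Π` with `X−Y` not parallel to `Π`: if `P₀ ∈ Π`
satisfies `p₂(Y−P₀) − p₁(P₀−X) ∥ ν`, then `P₀` is the unique minimizer over `Π` of
`F(P) = N₁(P−X) + N₂(Y−P)`. -/
theorem stmt7 {n : ℕ} (N₁ N₂ : EuclideanSpace ℝ (Fin n) → ℝ)
    (hN₁_add : ∀ x y, N₁ (x + y) ≤ N₁ x + N₁ y)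
    (hN₁_smul : ∀ (c : ℝ) x, N₁ (c • x) = |c| * N₁ x)
    (hN₁_pos : ∀ x, x ≠ 0 → 0 < N₁ x)
    (hN₂_add : ∀ x y, N₂ (x + y) ≤ N₂ x + N₂ y)
    (hN₂_smul : ∀ (c : ℝ) x, N₂ (c • x) = |c| * N₂ x)
    (hN₂_pos : ∀ x, x ≠ 0 → 0 < N₂ x)
    (hstrict₁ : ∀ x y, N₁ x = 1 → N₁ y = 1 → x ≠ y →
      ∀ t : ℝ, 0 < t → t < 1 → N₁ (t • x + (1 - t) • y) < 1)
    (hstrict₂ : ∀ x y, N₂ x = 1 → N₂ y = 1 → x ≠ y →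
      ∀ t : ℝ, 0 < t → t < 1 → N₂ (t • x + (1 - t) • y) < 1)
    (p₁ p₂ : EuclideanSpace ℝ (Fin n) → EuclideanSpace ℝ (Fin n))
    (hp₁ : ∀ x, x ≠ 0 → HasGradientAt N₁ (p₁ x) x)
    (hp₂ : ∀ x, x ≠ 0 → HasGradientAt N₂ (p₂ x) x)
    (ν : EuclideanSpace ℝ (Fin n)) (hν : ‖ν‖ = 1) (c : ℝ)
    (X Y : EuclideanSpace ℝ (Fin n))
    (hX : ⟪X, ν⟫ ≠ c) (hY : ⟪Y, ν⟫ ≠ c) (hXY : ⟪X - Y, ν⟫ ≠ 0)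
    (P₀ : EuclideanSpace ℝ (Fin n)) (hP₀ : ⟪P₀, ν⟫ = c)
    (hsnell : ∃ lam : ℝ, p₂ (Y - P₀) - p₁ (P₀ - X) = lam • ν) :
    ∀ P, ⟪P, ν⟫ = c → P ≠ P₀ →
      N₁ (P₀ - X) + N₂ (Y - P₀) < N₁ (P - X) + N₂ (Y - P) :=
  stmt7_general N₁ N₂ hN₁_add hN₁_smul hN₁_pos hN₂_add hN₂_smul hstrict₁ p₁ p₂ hp₁ hp₂ ν c X Y hX hY
    P₀ hP₀ hsnell
end

section
/- Let κ = sup_{N₁(x)=1} N₂(x) < 1 and fix m with N₂(m)=1 and b > 0. The surface S = {ρ(x)x : N₁(x)=1, m·p₁(x) ≥ 1}, with ρ(x) = b/(1 − x·p₂(m)), lies in the hyperplane-like level set {X : N₁(X) = p₂(m)·X + b}, and at each of its points the vector ν = p₁(x) − p₂(m) satisfies x·ν > 0 and m·ν ≥ 0. -/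
/-!
A positively homogeneous subadditive function `N` with gradient `p` at `y` satisfies Euler's
identity `⟪p, y⟫ = N y` and the subgradient bound `⟪p, z⟫ ≤ N z`, both read off from the slope
of `t ↦ N (y + t • z)` at `0`. Hence `x·p₂(m) ≤ N₂(x) ≤ κ < 1`, so `ρ(x) > 0`, and the three claims
reduce to `x·p₁(x) = 1` and `m·p₂(m) = 1`.
-/

open RealInnerProductSpace Filter Topology

theorem HasLineDerivAt.le_of_add_smul_le {E : Type*} [AddCommGroup E] [Module ℝ E]
    {f : E → ℝ} {f' c : ℝ} {x v : E} (h : HasLineDerivAt ℝ f f' x v)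
    (hle : ∀ t : ℝ, 0 < t → f (x + t • v) ≤ f x + t * c) : f' ≤ c := by
  refine le_of_tendsto h.tendsto_slope_zero_right ?_
  filter_upwards [self_mem_nhdsWithin] with t (ht : 0 < t)
  rw [smul_eq_mul, inv_mul_le_iff₀ ht]
  linarith [hle t ht]

section Gradient

variable {E : Type*} [NormedAddCommGroup E] [InnerProductSpace ℝ E] [CompleteSpace E]
  {N : E → ℝ} {p y : E}

theorem HasGradientAt.hasLineDerivAt (h : HasGradientAt N p y) (v : E) :
    HasLineDerivAt ℝ N ⟪p, v⟫ y v :=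
  h.hasFDerivAt.hasLineDerivAt v

theorem HasGradientAt.inner_le_of_subadditive (h : HasGradientAt N p y)
    (hadd : ∀ u v, N (u + v) ≤ N u + N v) (hsmul : ∀ c : ℝ, 0 ≤ c → ∀ u, N (c • u) = c * N u)
    (z : E) : ⟪p, z⟫ ≤ N z :=
  (h.hasLineDerivAt z).le_of_add_smul_le fun t ht => by
    simpa only [hsmul t ht.le] using hadd y (t • z)

theorem HasGradientAt.inner_self_eq_of_homogeneous (h : HasGradientAt N p y)
    (hsmul : ∀ c : ℝ, 0 ≤ c → ∀ u, N (c • u) = c * N u) : ⟪p, y⟫ = N y := by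
  have hline : HasLineDerivAt ℝ N (N y) y y := by
    have hlin : HasDerivAt (fun t : ℝ => (1 + t) * N y) (N y) 0 := by
      simpa using ((hasDerivAt_id (0 : ℝ)).const_add 1).mul_const (N y)
    refine hlin.congr_of_eventuallyEq ?_
    filter_upwards [Ioi_mem_nhds (show (-1 : ℝ) < 0 by norm_num)] with t (ht : -1 < t)
    rw [← hsmul (1 + t) (by linarith) y, add_smul, one_smul]
  exact (h.hasLineDerivAt y).unique hline

end Gradient

theorem stmt12_general {n : ℕ} (N₁ N₂ : EuclideanSpace ℝ (Fin n) → ℝ)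
    (hN₁_smul : ∀ (c : ℝ) x, N₁ (c • x) = |c| * N₁ x)
    (hN₂_add : ∀ x y, N₂ (x + y) ≤ N₂ x + N₂ y)
    (hN₂_smul : ∀ (c : ℝ) x, N₂ (c • x) = |c| * N₂ x)
    (p₁ p₂ : EuclideanSpace ℝ (Fin n) → EuclideanSpace ℝ (Fin n))
    (hp₁ : ∀ x, x ≠ 0 → HasGradientAt N₁ (p₁ x) x)
    (hp₂ : ∀ x, x ≠ 0 → HasGradientAt N₂ (p₂ x) x)
    (κ : ℝ) (hκ : IsLUB {r : ℝ | ∃ x, N₁ x = 1 ∧ r = N₂ x} κ) (hκ1 : κ < 1)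
    (m : EuclideanSpace ℝ (Fin n)) (hm : N₂ m = 1) (b : ℝ) (hb : 0 < b)
    (x : EuclideanSpace ℝ (Fin n)) (hx : N₁ x = 1) (hxm : 1 ≤ ⟪m, p₁ x⟫) :
    N₁ ((b / (1 - ⟪x, p₂ m⟫)) • x)
      = ⟪p₂ m, (b / (1 - ⟪x, p₂ m⟫)) • x⟫ + b ∧
    0 < ⟪x, p₁ x - p₂ m⟫ ∧ 0 ≤ ⟪m, p₁ x - p₂ m⟫ := by
  have homog₁ : ∀ c : ℝ, 0 ≤ c → ∀ u, N₁ (c • u) = c * N₁ u := fun c hc u => by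
    rw [hN₁_smul, abs_of_nonneg hc]
  have homog₂ : ∀ c : ℝ, 0 ≤ c → ∀ u, N₂ (c • u) = c * N₂ u := fun c hc u => by
    rw [hN₂_smul, abs_of_nonneg hc]
  have hx0 : x ≠ 0 := by rintro rfl; simpa [hx] using hN₁_smul 0 0
  have hm0 : m ≠ 0 := by rintro rfl; simpa [hm] using hN₂_smul 0 0
  have euler₁ : ⟪x, p₁ x⟫ = 1 := by
    rw [real_inner_comm, (hp₁ x hx0).inner_self_eq_of_homogeneous homog₁, hx]
  have euler₂ : ⟪m, p₂ m⟫ = 1 := by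
    rw [real_inner_comm, (hp₂ m hm0).inner_self_eq_of_homogeneous homog₂, hm]
  have hxp₂ : ⟪x, p₂ m⟫ < 1 :=
    calc ⟪x, p₂ m⟫ = ⟪p₂ m, x⟫ := real_inner_comm _ _
      _ ≤ N₂ x := (hp₂ m hm0).inner_le_of_subadditive hN₂_add homog₂ x
      _ ≤ κ := hκ.1 ⟨x, hx, rfl⟩
      _ < 1 := hκ1
  have hρ : 0 < b / (1 - ⟪x, p₂ m⟫) := div_pos hb (sub_pos.2 hxp₂)
  refine ⟨?_, ?_, ?_⟩
  · have hden : 1 - ⟪x, p₂ m⟫ ≠ 0 := (sub_pos.2 hxp₂).ne'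
    rw [homog₁ _ hρ.le, hx, real_inner_smul_right, real_inner_comm x (p₂ m)]
    field_simp
    ring
  · rw [inner_sub_right, euler₁]
    linarith
  · rw [inner_sub_right, euler₂]
    linarith

/-- With `κ = sup_{N₁(x)=1} N₂(x) < 1`, `N₂(m)=1` and `b > 0`: each point `ρ(x)x` of the
uniformly refracting surface `S_I(m,b)` (where `ρ(x) = b/(1 − x·p₂(m))`, `N₁(x)=1`,
`m·p₁(x) ≥ 1`) lies on the level set `{X : N₁(X) = p₂(m)·X + b}`, and the normal
`ν = p₁(x) − p₂(m)` satisfies `x·ν > 0` and `m·ν ≥ 0`. -/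
theorem stmt12 {n : ℕ} (N₁ N₂ : EuclideanSpace ℝ (Fin n) → ℝ)
    (hN₁_add : ∀ x y, N₁ (x + y) ≤ N₁ x + N₁ y)
    (hN₁_smul : ∀ (c : ℝ) x, N₁ (c • x) = |c| * N₁ x)
    (hN₁_pos : ∀ x, x ≠ 0 → 0 < N₁ x)
    (hN₂_add : ∀ x y, N₂ (x + y) ≤ N₂ x + N₂ y)
    (hN₂_smul : ∀ (c : ℝ) x, N₂ (c • x) = |c| * N₂ x)
    (hN₂_pos : ∀ x, x ≠ 0 → 0 < N₂ x)
    (p₁ p₂ : EuclideanSpace ℝ (Fin n) → EuclideanSpace ℝ (Fin n))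
    (hp₁ : ∀ x, x ≠ 0 → HasGradientAt N₁ (p₁ x) x)
    (hp₂ : ∀ x, x ≠ 0 → HasGradientAt N₂ (p₂ x) x)
    (κ : ℝ) (hκ : IsLUB {r : ℝ | ∃ x, N₁ x = 1 ∧ r = N₂ x} κ) (hκ1 : κ < 1)
    (m : EuclideanSpace ℝ (Fin n)) (hm : N₂ m = 1) (b : ℝ) (hb : 0 < b)
    (x : EuclideanSpace ℝ (Fin n)) (hx : N₁ x = 1) (hxm : 1 ≤ ⟪m, p₁ x⟫) :
    N₁ ((b / (1 - ⟪x, p₂ m⟫)) • x)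
      = ⟪p₂ m, (b / (1 - ⟪x, p₂ m⟫)) • x⟫ + b ∧
    0 < ⟪x, p₁ x - p₂ m⟫ ∧ 0 ≤ ⟪m, p₁ x - p₂ m⟫ :=
  stmt12_general N₁ N₂ hN₁_smul hN₂_add hN₂_smul p₁ p₂ hp₁ hp₂ κ hκ hκ1 m hm b hb x hx hxm
end

section
/- Let κ = sup_{N₁(x)=1} N₂(x) < 1, Ω₁ a subset of the N₁-unit sphere, and ρ : Ω₁ → (0,∞) a bounded function such that for every x₀ ∈ Ω₁ there exist m with N₂(m)=1 and b > 0 with ρ(x) ≤ b/(1 − x·p₂(m)) for all x ∈ Ω₁ with equality at x₀. Then ρ is Lipschitz continuous on Ω₁ with a Lipschitz constant depending only on sup ρ, κ, and sup_{N₂(m)=1} |p₂(m)|. -/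
/-!
A subadditive, positively homogeneous function dominates its own derivative at any point
(compare difference quotients along `m + t • x`), so `⟪x, p₂ m⟫ ≤ N₂ x ≤ κ` on `Ω₁`: every
supporting profile `b / (1 - ⟪x, p₂ m⟫)` has denominator at least `1 - κ`. If the profile
touching `ρ` at `y` bounds `ρ` at `x`, then
`ρ x - ρ y ≤ ρ y · ⟪x - y, p₂ m⟫ / (1 - ⟪x, p₂ m⟫) ≤ M · Pb · ‖x - y‖ / (1 - κ)`,
and exchanging `x` and `y` gives the Lipschitz bound.
-/

open Filter RealInnerProductSpace

theorem HasFDerivAt.apply_le_of_subadditive {E : Type*} [NormedAddCommGroup E]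
    [NormedSpace ℝ E] {N : E → ℝ} {L : E →L[ℝ] ℝ} {m : E}
    (hadd : ∀ x y, N (x + y) ≤ N x + N y) (hsmul : ∀ t : ℝ, 0 < t → ∀ x, N (t • x) = t * N x)
    (hN : HasFDerivAt N L m) (x : E) : L x ≤ N x := by
  refine le_of_tendsto (hN.hasLineDerivAt x).tendsto_slope_zero_right ?_
  filter_upwards [self_mem_nhdsWithin] with t (ht : 0 < t)
  rw [smul_eq_mul, inv_mul_le_iff₀ ht, sub_le_iff_le_add', ← hsmul t ht]
  exact hadd m (t • x)

theorem HasGradientAt.inner_le_of_subadditive_s14 {E : Type*} [NormedAddCommGroup E]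
    [InnerProductSpace ℝ E] [CompleteSpace E] {N : E → ℝ} {p m : E}
    (hadd : ∀ x y, N (x + y) ≤ N x + N y) (hsmul : ∀ t : ℝ, 0 < t → ∀ x, N (t • x) = t * N x)
    (hN : HasGradientAt N p m) (x : E) : ⟪x, p⟫ ≤ N x := by
  simpa [real_inner_comm] using hN.hasFDerivAt.apply_le_of_subadditive hadd hsmul x

theorem div_one_sub_sub_div_one_sub_le {a b c κ M L : ℝ} (hb : 0 < b) (ha : a ≤ κ) (hκ : κ < 1)
    (hc : c < 1) (hM : b / (1 - c) ≤ M) (hac : a - c ≤ L) (hL : 0 ≤ L) :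
    b / (1 - a) - b / (1 - c) ≤ M * L / (1 - κ) := by
  have ha' : 0 < 1 - a := by linarith
  have hc' : 0 < 1 - c := by linarith
  have hM0 : 0 ≤ M := (div_pos hb hc').le.trans hM
  have hfactor : b / (1 - a) - b / (1 - c) = b / (1 - c) * ((a - c) / (1 - a)) := by
    field_simp
    ring
  rw [hfactor, mul_div_assoc]
  rcases le_or_gt (a - c) 0 with hneg | hpos
  · exact (mul_nonpos_of_nonneg_of_nonpos (div_pos hb hc').le (div_nonpos_of_nonpos_of_nonneg
      hneg ha'.le)).trans (mul_nonneg hM0 (div_nonneg hL (by linarith)))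
  · exact mul_le_mul hM (div_le_div₀ hL hac (by linarith) (by linarith))
      (div_nonneg hpos.le ha'.le) hM0

section SupportingProfiles

variable {E : Type*} [NormedAddCommGroup E] [InnerProductSpace ℝ E] {Ω : Set E} {ρ : E → ℝ}
  {κ M P : ℝ}

theorem sub_le_of_supporting_profiles (hκ : κ < 1) (hM : ∀ x ∈ Ω, ρ x ≤ M)
    (hsupp : ∀ y ∈ Ω, ∃ q b, ‖q‖ ≤ P ∧ (∀ x ∈ Ω, ⟪x, q⟫ ≤ κ) ∧ 0 < b ∧
      (∀ x ∈ Ω, ρ x ≤ b / (1 - ⟪x, q⟫)) ∧ ρ y = b / (1 - ⟪y, q⟫))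
    {x y : E} (hx : x ∈ Ω) (hy : y ∈ Ω) : ρ x - ρ y ≤ M * P / (1 - κ) * ‖x - y‖ := by
  obtain ⟨q, b, hqP, hqκ, hb, hle, heq⟩ := hsupp y hy
  have hinner : ⟪x, q⟫ - ⟪y, q⟫ ≤ P * ‖x - y‖ :=
    calc ⟪x, q⟫ - ⟪y, q⟫ = ⟪x - y, q⟫ := (inner_sub_left x y q).symm
      _ ≤ ‖x - y‖ * ‖q‖ := real_inner_le_norm _ _
      _ ≤ P * ‖x - y‖ := by rw [mul_comm]; gcongr
  calc ρ x - ρ y ≤ b / (1 - ⟪x, q⟫) - b / (1 - ⟪y, q⟫) := by rw [heq]; gcongr; exact hle x hx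
    _ ≤ M * (P * ‖x - y‖) / (1 - κ) :=
      div_one_sub_sub_div_one_sub_le hb (hqκ x hx) hκ ((hqκ y hy).trans_lt hκ) (heq ▸ hM y hy)
        hinner (mul_nonneg ((norm_nonneg q).trans hqP) (norm_nonneg _))
    _ = M * P / (1 - κ) * ‖x - y‖ := by ring

theorem abs_sub_le_of_supporting_profiles (hκ : κ < 1) (hM : ∀ x ∈ Ω, ρ x ≤ M)
    (hsupp : ∀ y ∈ Ω, ∃ q b, ‖q‖ ≤ P ∧ (∀ x ∈ Ω, ⟪x, q⟫ ≤ κ) ∧ 0 < b ∧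
      (∀ x ∈ Ω, ρ x ≤ b / (1 - ⟪x, q⟫)) ∧ ρ y = b / (1 - ⟪y, q⟫))
    {x y : E} (hx : x ∈ Ω) (hy : y ∈ Ω) : |ρ x - ρ y| ≤ M * P / (1 - κ) * ‖x - y‖ :=
  abs_sub_le_iff.2 ⟨sub_le_of_supporting_profiles hκ hM hsupp hx hy,
    norm_sub_rev x y ▸ sub_le_of_supporting_profiles hκ hM hsupp hy hx⟩

end SupportingProfiles

theorem stmt14_general {n : ℕ} (N₁ N₂ : EuclideanSpace ℝ (Fin n) → ℝ)
    (hN₂_add : ∀ x y, N₂ (x + y) ≤ N₂ x + N₂ y)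
    (hN₂_smul : ∀ (c : ℝ) x, N₂ (c • x) = |c| * N₂ x)
    (p₂ : EuclideanSpace ℝ (Fin n) → EuclideanSpace ℝ (Fin n))
    (hp₂ : ∀ x, x ≠ 0 → HasGradientAt N₂ (p₂ x) x)
    (κ : ℝ) (hκ : IsLUB {r : ℝ | ∃ x, N₁ x = 1 ∧ r = N₂ x} κ) (hκ1 : κ < 1)
    (Ω₁ : Set (EuclideanSpace ℝ (Fin n))) (hΩ : Ω₁ ⊆ {x | N₁ x = 1})
    (ρ : EuclideanSpace ℝ (Fin n) → ℝ)
    (M : ℝ) (hM : ∀ x ∈ Ω₁, ρ x ≤ M)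
    (Pb : ℝ) (hPb : ∀ m, N₂ m = 1 → ‖p₂ m‖ ≤ Pb)
    (hsupp : ∀ x₀ ∈ Ω₁, ∃ m b, N₂ m = 1 ∧ 0 < b ∧
      (∀ x ∈ Ω₁, ρ x ≤ b / (1 - ⟪x, p₂ m⟫)) ∧
      ρ x₀ = b / (1 - ⟪x₀, p₂ m⟫)) :
    ∀ x ∈ Ω₁, ∀ y ∈ Ω₁, |ρ x - ρ y| ≤ (M * Pb / (1 - κ)) * ‖x - y‖ := by
  have hN₂_inner : ∀ m, N₂ m = 1 → ∀ x, ⟪x, p₂ m⟫ ≤ N₂ x := by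
    intro m hm
    have hm0 : m ≠ 0 := by rintro rfl; simpa [hm] using hN₂_smul 0 0
    exact (hp₂ m hm0).inner_le_of_subadditive_s14 hN₂_add
      fun t ht x => by rw [hN₂_smul, abs_of_pos ht]
  intro x hx y hy
  refine abs_sub_le_of_supporting_profiles hκ1 hM (fun y hy => ?_) hx hy
  obtain ⟨m, b, hm, hb, hle, heq⟩ := hsupp y hy
  exact ⟨p₂ m, b, hPb m hm, fun x hx => (hN₂_inner m hm x).trans (hκ.1 ⟨x, hΩ hx, rfl⟩),
    hb, hle, heq⟩

/-- With `κ = sup_{N₁(x)=1} N₂(x) < 1`: if `ρ : Ω₁ → (0,∞)` is bounded by `M`, the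
gradients `p₂(m)` are bounded by `Pb`, and at every `x₀ ∈ Ω₁` the graph of `ρ` is
supported by some `S_I(m,b)`, then `ρ` is Lipschitz on `Ω₁` with constant
`M·Pb/(1−κ)` (depending only on `sup ρ`, `κ` and `sup |p₂|`). -/
theorem stmt14 {n : ℕ} (N₁ N₂ : EuclideanSpace ℝ (Fin n) → ℝ)
    (hN₁_add : ∀ x y, N₁ (x + y) ≤ N₁ x + N₁ y)
    (hN₁_smul : ∀ (c : ℝ) x, N₁ (c • x) = |c| * N₁ x)
    (hN₁_pos : ∀ x, x ≠ 0 → 0 < N₁ x)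
    (hN₂_add : ∀ x y, N₂ (x + y) ≤ N₂ x + N₂ y)
    (hN₂_smul : ∀ (c : ℝ) x, N₂ (c • x) = |c| * N₂ x)
    (hN₂_pos : ∀ x, x ≠ 0 → 0 < N₂ x)
    (p₂ : EuclideanSpace ℝ (Fin n) → EuclideanSpace ℝ (Fin n))
    (hp₂ : ∀ x, x ≠ 0 → HasGradientAt N₂ (p₂ x) x)
    (κ : ℝ) (hκ : IsLUB {r : ℝ | ∃ x, N₁ x = 1 ∧ r = N₂ x} κ) (hκ1 : κ < 1)
    (Ω₁ : Set (EuclideanSpace ℝ (Fin n))) (hΩ : Ω₁ ⊆ {x | N₁ x = 1})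
    (ρ : EuclideanSpace ℝ (Fin n) → ℝ) (hρpos : ∀ x ∈ Ω₁, 0 < ρ x)
    (M : ℝ) (hM : ∀ x ∈ Ω₁, ρ x ≤ M)
    (Pb : ℝ) (hPb : ∀ m, N₂ m = 1 → ‖p₂ m‖ ≤ Pb)
    (hsupp : ∀ x₀ ∈ Ω₁, ∃ m b, N₂ m = 1 ∧ 0 < b ∧
      (∀ x ∈ Ω₁, ρ x ≤ b / (1 - ⟪x, p₂ m⟫)) ∧
      ρ x₀ = b / (1 - ⟪x₀, p₂ m⟫)) :
    ∀ x ∈ Ω₁, ∀ y ∈ Ω₁, |ρ x - ρ y| ≤ (M * Pb / (1 - κ)) * ‖x - y‖ :=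
  stmt14_general N₁ N₂ hN₂_add hN₂_smul p₂ hp₂ κ hκ hκ1 Ω₁ hΩ ρ M hM Pb hPb hsupp
end

section
/- Let τ₁, τ₂, τ₃ > 0 and for p = (p₁,p₂,p₃) define Φ(p) = ½(1/τ₂+1/τ₃)p₁² + ½(1/τ₁+1/τ₃)p₂² + ½(1/τ₁+1/τ₂)p₃² and Ψ(p) = |p|²·(p₁²/(τ₂τ₃) + p₂²/(τ₁τ₃) + p₃²/(τ₁τ₂)). Then Φ(p)² ≥ Ψ(p) for all p ∈ ℝ³, and moreover det(D + Skew(p)²) = τ₁τ₂τ₃·(1 − 2Φ(p) + Ψ(p)) where D = diag(τ₁,τ₂,τ₃). -/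
/-- The skew-symmetric matrix of `p ∈ ℝ³`, so that `Skew(p) w = p × w`. -/
def Skew (v : Fin 3 → ℝ) : Matrix (Fin 3) (Fin 3) ℝ :=
  !![0, -v 2, v 1; v 2, 0, -v 0; -v 1, v 0, 0]

lemma aux_sos (u v w a b c : ℝ) (ha : 0 ≤ a) (hb : 0 ≤ b) (hc : 0 ≤ c) :
    (a + b + c) * (v * w * a + u * w * b + u * v * c) ≤
    ((1/2) * (v + w) * a + (1/2) * (u + w) * b + (1/2) * (u + v) * c) ^ 2 := by
  rcases le_or_gt 0 ((v - w) * (u - w)) with h | h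
  · nlinarith [sq_nonneg (-((v-w)*a) + (u-w)*b + (u-v)*c), mul_nonneg (mul_nonneg ha hb) h]
  · have h2 : 0 ≤ (u - w) * (u - v) := by nlinarith [sq_nonneg (u - w)]
    nlinarith [sq_nonneg ((v-w)*a + (u-w)*b - (u-v)*c), mul_nonneg (mul_nonneg hb hc) h2]

/-- For `τ₁, τ₂, τ₃ > 0` and `p ∈ ℝ³`, with
`Φ(p) = ½(1/τ₂+1/τ₃)p₁² + ½(1/τ₁+1/τ₃)p₂² + ½(1/τ₁+1/τ₂)p₃²` and
`Ψ(p) = |p|²(p₁²/(τ₂τ₃) + p₂²/(τ₁τ₃) + p₃²/(τ₁τ₂))`, one has `Φ(p)² ≥ Ψ(p)` and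
`det(D + Skew(p)²) = τ₁τ₂τ₃ (1 − 2Φ(p) + Ψ(p))` where `D = diag(τ₁,τ₂,τ₃)`. -/
theorem stmt19 (τ₁ τ₂ τ₃ : ℝ) (h₁ : 0 < τ₁) (h₂ : 0 < τ₂) (h₃ : 0 < τ₃)
    (p : Fin 3 → ℝ)
    (Φ Ψ : ℝ)
    (hΦ : Φ = (1 / 2) * (1 / τ₂ + 1 / τ₃) * (p 0) ^ 2
        + (1 / 2) * (1 / τ₁ + 1 / τ₃) * (p 1) ^ 2
        + (1 / 2) * (1 / τ₁ + 1 / τ₂) * (p 2) ^ 2)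
    (hΨ : Ψ = ((p 0) ^ 2 + (p 1) ^ 2 + (p 2) ^ 2) *
        ((p 0) ^ 2 / (τ₂ * τ₃) + (p 1) ^ 2 / (τ₁ * τ₃) + (p 2) ^ 2 / (τ₁ * τ₂))) :
    Ψ ≤ Φ ^ 2 ∧
    (Matrix.diagonal ![τ₁, τ₂, τ₃] + Skew p * Skew p).det
      = τ₁ * τ₂ * τ₃ * (1 - 2 * Φ + Ψ) := by
  constructor
  · have e1 : (p 0) ^ 2 / (τ₂ * τ₃) = (1/τ₂) * (1/τ₃) * (p 0) ^ 2 := by field_simp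
    have e2 : (p 1) ^ 2 / (τ₁ * τ₃) = (1/τ₁) * (1/τ₃) * (p 1) ^ 2 := by field_simp
    have e3 : (p 2) ^ 2 / (τ₁ * τ₂) = (1/τ₁) * (1/τ₂) * (p 2) ^ 2 := by field_simp
    rw [hΦ, hΨ, e1, e2, e3]
    exact aux_sos (1/τ₁) (1/τ₂) (1/τ₃) _ _ _ (sq_nonneg _) (sq_nonneg _) (sq_nonneg _)
  · subst hΦ hΨ
    simp only [Skew, Matrix.det_fin_three, Matrix.add_apply, Matrix.mul_apply,
      Fin.sum_univ_three, Matrix.diagonal_apply, Matrix.cons_val', Matrix.cons_val_zero,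
      Matrix.cons_val_one, Matrix.head_cons, Matrix.empty_val', Matrix.cons_val_fin_one,
      Matrix.head_fin_const, Matrix.cons_val_two, Matrix.tail_cons, Matrix.of_apply]
    norm_num [Fin.ext_iff]
    field_simp
    ring
end
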